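/- For u ∈ (0,1), let a = √(1/u² - 1), b ∈ (0,1), σ ∈ (0, 1/2), c = √(a² + b²). Define U(a,b) = ([a² + 1 - 4b(√(a²+b²) - b)]^{-σ} - (a²+1)^{-σ}) / √(a²+b²). Then there is an absolute constant C > 0 such that U(a,b) ≤ C · u² · (1 - b²)^{-σ}. -/

import Mathlib

/-!
Write `A = a² + 1 = u⁻²` and `Υ = A - 4b(c - b)`, so the numerator is `Υ^(-σ) - A^(-σ)`.
With `s = (1 - 2u)²` one has `s A ≤ Υ`, i.e. `u b (c - b) ≤ 1 - u`; hence
`s^σ Υ^(-σ) ≤ A^(-σ)` and the numerator is at most `(1 - s^σ) Υ^(-σ) ≤ (1 - s) Υ^(-σ)`,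
where `1 - s = 4u(1 - u)`. Finally `Υ = (c - 2b)² + 1 - b² ≥ 1 - b²` bounds `Υ^(-σ)`,
and `u c ≥ 1 - u` turns `4u(1 - u)` into `4u² c`, which absorbs the division by `c`.
-/

open Real

lemma rpow_neg_sub_rpow_neg_le {s A Υ σ : ℝ} (hs : 0 ≤ s) (hA : 0 < A) (hΥ : 0 < Υ)
    (hσ : 0 ≤ σ) (h : s * A ≤ Υ) :
    Υ ^ (-σ) - A ^ (-σ) ≤ (1 - s ^ σ) * Υ ^ (-σ) := by
  have hpow : s ^ σ * A ^ σ ≤ Υ ^ σ := by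
    rw [← mul_rpow hs hA.le]
    exact rpow_le_rpow (mul_nonneg hs hA.le) h hσ
  have hAσ : 0 < A ^ σ := rpow_pos_of_pos hA σ
  have hΥσ : 0 < Υ ^ σ := rpow_pos_of_pos hΥ σ
  have key : s ^ σ * Υ ^ (-σ) ≤ A ^ (-σ) := by
    rw [rpow_neg hΥ.le, rpow_neg hA.le, ← div_eq_mul_inv, div_le_iff₀ hΥσ,
      ← div_eq_inv_mul, le_div_iff₀ hAσ]
    exact hpow
  linarith

section Geometry

variable {u a b c : ℝ}

lemma one_sub_sq_le_of_sq_eq (hc : c ^ 2 = a ^ 2 + b ^ 2) :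
    1 - b ^ 2 ≤ a ^ 2 + 1 - 4 * b * (c - b) := by
  nlinarith [sq_nonneg (c - 2 * b)]

lemma one_sub_le_mul_of_sq_eq (hu : 0 ≤ u) (hA : u ^ 2 * (a ^ 2 + 1) = 1)
    (hc : c ^ 2 = a ^ 2 + b ^ 2) (hc0 : 0 ≤ c) : 1 - u ≤ u * c := by
  have hu1 : u ≤ 1 := by nlinarith [sq_nonneg a]
  exact le_of_sq_le_sq (by nlinarith [sq_nonneg b]) (by positivity)

lemma le_mul_of_sq_eq (hu : 0 ≤ u) (hb : 0 ≤ b) (hb1 : b ≤ 1)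
    (hA : u ^ 2 * (a ^ 2 + 1) = 1) (hc : c ^ 2 = a ^ 2 + b ^ 2) (hc0 : 0 ≤ c) : b ≤ u * c := by
  have hb2 : b ^ 2 * (1 - u ^ 2) ≤ 1 - u ^ 2 := by
    nlinarith [mul_nonneg (by nlinarith : (0:ℝ) ≤ 1 - b ^ 2) (by nlinarith : (0:ℝ) ≤ 1 - u ^ 2)]
  exact le_of_sq_le_sq (by nlinarith) (by positivity)

/-- Since `c² = u⁻² - 1 + b²`, `(1 + u) (1 - u - u b (c - b)) = u (c - b) (u c - b)`. -/
lemma mul_mul_sub_le_of_sq_eq (hu : 0 ≤ u) (hb : 0 ≤ b) (hb1 : b ≤ 1)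
    (hA : u ^ 2 * (a ^ 2 + 1) = 1) (hc : c ^ 2 = a ^ 2 + b ^ 2) (hc0 : 0 ≤ c) :
    u * b * (c - b) ≤ 1 - u := by
  have hbc : b ≤ c := le_of_sq_le_sq (by nlinarith [sq_nonneg a]) hc0
  have hbuc := le_mul_of_sq_eq hu hb hb1 hA hc hc0
  have hprod : 0 ≤ u * (c - b) * (u * c - b) := by
    have := sub_nonneg.2 hbc; have := sub_nonneg.2 hbuc; positivity
  nlinarith

lemma sq_one_sub_two_mul_mul_le (hu : 0 ≤ u) (hb : 0 ≤ b) (hb1 : b ≤ 1)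
    (hA : u ^ 2 * (a ^ 2 + 1) = 1) (hc : c ^ 2 = a ^ 2 + b ^ 2) (hc0 : 0 ≤ c) :
    (1 - 2 * u) ^ 2 * (a ^ 2 + 1) ≤ a ^ 2 + 1 - 4 * b * (c - b) := by
  have key := mul_mul_sub_le_of_sq_eq hu hb hb1 hA hc hc0
  have hu2 : 0 < u ^ 2 := by nlinarith
  refine le_of_mul_le_mul_left ?_ hu2
  nlinarith

end Geometry

theorem U_bound :
    ∃ C : ℝ, 0 < C ∧
      ∀ u b σ : ℝ, 0 < u → u < 1 → 0 < b → b < 1 → 0 < σ → σ < 1/2 →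
        let a := Real.sqrt (1 / u ^ 2 - 1)
        ((a ^ 2 + 1 - 4 * b * (Real.sqrt (a ^ 2 + b ^ 2) - b)) ^ (-σ)
            - (a ^ 2 + 1) ^ (-σ)) / Real.sqrt (a ^ 2 + b ^ 2) ≤
          C * u ^ 2 * (1 - b ^ 2) ^ (-σ) := by
  refine ⟨4, by norm_num, fun u b σ hu hu1 hb hb1 hσ hσ1 => ?_⟩
  intro a
  have hA : u ^ 2 * (a ^ 2 + 1) = 1 := by
    have h1 : 1 ≤ 1 / u ^ 2 := by rw [le_div_iff₀ (by positivity)]; nlinarith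
    rw [sq_sqrt (by linarith)]
    field_simp; ring
  set c := √(a ^ 2 + b ^ 2)
  have hc : c ^ 2 = a ^ 2 + b ^ 2 := sq_sqrt (by positivity)
  have hc0 : 0 < c := sqrt_pos.2 (by positivity)
  set Υ := a ^ 2 + 1 - 4 * b * (c - b)
  set s := (1 - 2 * u) ^ 2
  have hb2 : 0 < 1 - b ^ 2 := by nlinarith
  have hΥ : 1 - b ^ 2 ≤ Υ := one_sub_sq_le_of_sq_eq hc
  have hΥ0 : 0 < Υ := hb2.trans_le hΥ
  have hs1 : s ≤ 1 := by nlinarith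
  rw [div_le_iff₀ hc0]
  calc Υ ^ (-σ) - (a ^ 2 + 1) ^ (-σ)
      ≤ (1 - s ^ σ) * Υ ^ (-σ) :=
        rpow_neg_sub_rpow_neg_le (sq_nonneg _) (by positivity) hΥ0 hσ.le
          (sq_one_sub_two_mul_mul_le hu.le hb.le hb1.le hA hc hc0.le)
    _ ≤ (1 - s) * (1 - b ^ 2) ^ (-σ) := by
        have hsσ : s ≤ s ^ σ := self_le_rpow_of_le_one (sq_nonneg _) hs1 (by linarith)
        exact mul_le_mul (by linarith) (rpow_le_rpow_of_nonpos hb2 hΥ (by linarith))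
          (rpow_nonneg hΥ0.le _) (by linarith)
    _ ≤ 4 * u ^ 2 * c * (1 - b ^ 2) ^ (-σ) := by
        have hcu := one_sub_le_mul_of_sq_eq hu.le hA hc hc0.le
        have hs : 1 - s ≤ 4 * u ^ 2 * c := by
          nlinarith [mul_le_mul_of_nonneg_left hcu (by positivity : (0 : ℝ) ≤ 4 * u)]
        exact mul_le_mul_of_nonneg_right hs (rpow_nonneg hb2.le _)
    _ = 4 * u ^ 2 * (1 - b ^ 2) ^ (-σ) * c := by ring
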